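/- Let n ≥ 3 and let β, δ : S¹ → ℝⁿ be continuous nowhere-zero loops. Then there exist continuous nowhere-zero loops β₁, β₂, δ₁, δ₂ : S¹ → ℝⁿ with β = β₁ + β₂ and δ = δ₁ + δ₂ such that for every t ∈ S¹ and every i, j ∈ {1,2}, the set {βᵢ(t), δⱼ(t)} is linearly independent in ℝⁿ. -/
import Mathlib

lemma coord_abs_le_norm {n : ℕ} (u : EuclideanSpace ℝ (Fin n)) (i : Fin n) :
    |u i| ≤ ‖u‖ := by
  rw [EuclideanSpace.norm_eq]
  rw [show |u i| = Real.sqrt (|u i| ^ 2) by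
    rw [Real.sqrt_sq_eq_abs, abs_abs]]
  apply Real.sqrt_le_sqrt
  have := Finset.single_le_sum (f := fun j => ‖u j‖ ^ 2)
    (fun j _ => by positivity) (Finset.mem_univ i)
  simpa [Real.norm_eq_abs] using this

lemma li_of_det {n : ℕ} (i j : Fin n) (hij : i ≠ j)
    (u v : EuclideanSpace ℝ (Fin n))
    (hdet : u i * v j - u j * v i ≠ 0) :
    LinearIndependent ℝ ![u, v] := by
  rw [LinearIndependent.pair_iff]
  intro s t hst
  have h1 : s * u i + t * v i = 0 := by
    simpa [PiLp.add_apply, PiLp.smul_apply, smul_eq_mul] using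
      congrArg (fun (w : EuclideanSpace ℝ (Fin n)) => w i) hst
  have h2 : s * u j + t * v j = 0 := by
    simpa [PiLp.add_apply, PiLp.smul_apply, smul_eq_mul] using
      congrArg (fun (w : EuclideanSpace ℝ (Fin n)) => w j) hst
  constructor
  · by_contra hs
    apply hdet
    have hkey : s * (u i * v j - u j * v i) = 0 := by
      linear_combination v j * h1 - v i * h2
    rcases mul_eq_zero.1 hkey with h | h
    · exact absurd h hs
    · exact h
  · by_contra ht
    apply hdet
    have hkey : t * (u i * v j - u j * v i) = 0 := by
      linear_combination u i * h2 - u j * h1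
    rcases mul_eq_zero.1 hkey with h | h
    · exact absurd h ht
    · exact h

set_option maxHeartbeats 1000000 in
/-- For `n ≥ 3`, any two continuous nowhere-zero loops `β, δ : S¹ → ℝⁿ` can be written as
`β = β₁ + β₂`, `δ = δ₁ + δ₂` with each summand nowhere zero and with `{βᵢ(t), δⱼ(t)}`
linearly independent for every `t` and every `i, j`. -/
theorem continuous_loops_split_pairwise_independent (n : ℕ) (hn : 3 ≤ n)
    (β δ : C(Circle, EuclideanSpace ℝ (Fin n)))
    (hβ : ∀ t, β t ≠ 0) (hδ : ∀ t, δ t ≠ 0) :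
    ∃ β₁ β₂ δ₁ δ₂ : C(Circle, EuclideanSpace ℝ (Fin n)),
      (∀ t, β₁ t ≠ 0) ∧ (∀ t, β₂ t ≠ 0) ∧ (∀ t, δ₁ t ≠ 0) ∧ (∀ t, δ₂ t ≠ 0) ∧
      β = β₁ + β₂ ∧ δ = δ₁ + δ₂ ∧
      ∀ t : Circle, ∀ b ∈ ({β₁, β₂} : Set C(Circle, EuclideanSpace ℝ (Fin n))),
        ∀ d ∈ ({δ₁, δ₂} : Set C(Circle, EuclideanSpace ℝ (Fin n))),
          LinearIndependent ℝ ![b t, d t] := by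
  have h0 : (0 : ℕ) < n := by omega
  have h1 : (1 : ℕ) < n := by omega
  set i0 : Fin n := ⟨0, h0⟩ with hi0
  set i1 : Fin n := ⟨1, h1⟩ with hi1
  have hij : i0 ≠ i1 := by simp [hi0, hi1, Fin.ext_iff]
  set B : ℝ := ‖β‖ + ‖δ‖ with hB
  have hB0 : 0 ≤ B := by positivity
  set M : ℝ := 2 * B + 1 with hM
  have hM0 : 0 < M := by positivity
  set v₁ : EuclideanSpace ℝ (Fin n) := EuclideanSpace.single i0 M with hv₁
  set v₂ : EuclideanSpace ℝ (Fin n) := EuclideanSpace.single i1 M with hv₂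
  have e10 : v₁ i0 = M := by simp [hv₁, EuclideanSpace.single_apply]
  have e11 : v₁ i1 = 0 := by
    simp [hv₁, EuclideanSpace.single_apply, (Ne.symm hij)]
  have e20 : v₂ i0 = 0 := by
    simp [hv₂, EuclideanSpace.single_apply, hij]
  have e21 : v₂ i1 = M := by simp [hv₂, EuclideanSpace.single_apply]
  have hbb : ∀ (t : Circle) (i : Fin n), |β t i| ≤ B := by
    intro t i
    refine (coord_abs_le_norm _ i).trans ?_
    have h3 := β.norm_coe_le_norm t
    have h2 : (0:ℝ) ≤ ‖δ‖ := norm_nonneg _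
    rw [hB]; linarith
  have hdd : ∀ (t : Circle) (i : Fin n), |δ t i| ≤ B := by
    intro t i
    refine (coord_abs_le_norm _ i).trans ?_
    have h3 := δ.norm_coe_le_norm t
    have h2 : (0:ℝ) ≤ ‖β‖ := norm_nonneg _
    rw [hB]; linarith
  refine ⟨β + ContinuousMap.const _ v₁, ContinuousMap.const _ (-v₁),
         δ + ContinuousMap.const _ v₂, ContinuousMap.const _ (-v₂),
         ?_, ?_, ?_, ?_, ?_, ?_, ?_⟩
  · intro t h
    have hc := congrArg (fun (w : EuclideanSpace ℝ (Fin n)) => w i0) h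
    simp only [ContinuousMap.add_apply, ContinuousMap.const_apply, PiLp.add_apply,
      PiLp.zero_apply, e10] at hc
    have habs := abs_le.1 (hbb t i0)
    rw [hM] at hc
    linarith [habs.1]
  · intro t h
    have hc := congrArg (fun (w : EuclideanSpace ℝ (Fin n)) => w i0) h
    simp only [ContinuousMap.const_apply, PiLp.neg_apply, PiLp.zero_apply, e10] at hc
    linarith
  · intro t h
    have hc := congrArg (fun (w : EuclideanSpace ℝ (Fin n)) => w i1) h
    simp only [ContinuousMap.add_apply, ContinuousMap.const_apply, PiLp.add_apply,
      PiLp.zero_apply, e21] at hc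
    have habs := abs_le.1 (hdd t i1)
    rw [hM] at hc
    linarith [habs.1]
  · intro t h
    have hc := congrArg (fun (w : EuclideanSpace ℝ (Fin n)) => w i1) h
    simp only [ContinuousMap.const_apply, PiLp.neg_apply, PiLp.zero_apply, e21] at hc
    linarith
  · ext t i; simp
  · ext t i; simp
  · intro t b hb d hd
    have hb0 := abs_le.1 (hbb t i0); have hb1 := abs_le.1 (hbb t i1)
    have hd0 := abs_le.1 (hdd t i0); have hd1 := abs_le.1 (hdd t i1)
    have key : ∀ u v : EuclideanSpace ℝ (Fin n),
        u i0 * v i1 - u i1 * v i0 ≠ 0 → LinearIndependent ℝ ![u, v] :=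
      fun u v h => li_of_det i0 i1 hij u v h
    rcases hb with hb | hb <;> (try rw [Set.mem_singleton_iff] at hb) <;>
      rcases hd with hd | hd <;> (try rw [Set.mem_singleton_iff] at hd) <;>
      subst hb <;> subst hd <;> apply key <;>
      simp only [ContinuousMap.add_apply, ContinuousMap.const_apply, PiLp.add_apply,
        PiLp.neg_apply, e10, e11, e20, e21] <;>
      nlinarith [hb0.1, hb0.2, hb1.1, hb1.2, hd0.1, hd0.2, hd1.1, hd1.2, hB0, hM, hM0]
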